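/- arXiv:2409.14991 — 3 statements merged into one kernel-verified Lean document; each statement's English description precedes it below -/
import Mathlib

section
/- With 𝓕^i_l as above, for all t ∈ ℤ_d, all l ∈ ℤ_d^{2m-2}, and all 3 ≤ i ≤ m: Σ over q_2,...,q_{2i-3} ∈ ℤ_d of 𝓕^i_l(t + c_i) = κ_B(t + q_{2i-2} | i-1)·g^i_l(t). -/
open scoped BigOperators

noncomputable section

/-- The component `q_i` (for `i ∈ {2, ..., 2m-1}`) of the tuple
`l = (q_2, ..., q_{2m-1}) ∈ ℤ_d^{2m-2}` (coordinate `i-2` of `l`), and `0` otherwise. -/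
def qOf (d m : ℕ) (l : Fin (2 * m - 2) → ZMod d) (i : ℕ) : ZMod d :=
  if h : i - 2 < 2 * m - 2 then l ⟨i - 2, h⟩ else 0

/-- `c_k = Σ_{i=3}^{2k-2} q_i` (so `c_2 = 0`). -/
def cOf (d m : ℕ) (l : Fin (2 * m - 2) → ZMod d) (k : ℕ) : ZMod d :=
  ∑ i ∈ Finset.Icc 3 (2 * k - 2), qOf d m l i

/-- Alice's marginal `κ_A(a|x)` (computed with Bob's input `1`; for a no-signaling
behavior it is independent of Bob's input). -/
def margA (d : ℕ) [NeZero d] (κ : ℕ → ℕ → ZMod d → ZMod d → ℝ) (x : ℕ) (a : ZMod d) : ℝ :=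
  ∑ b : ZMod d, κ x 1 a b

/-- Bob's marginal `κ_B(b|y)` (computed with Alice's input `2`). -/
def margB (d : ℕ) [NeZero d] (κ : ℕ → ℕ → ZMod d → ZMod d → ℝ) (y : ℕ) (b : ZMod d) : ℝ :=
  ∑ a : ZMod d, κ 2 y a b

/-- The factor `g^k_l(t) = κ(t, t+q_{2k-2}|k,k-1)·κ(t, t-q_{2k-1}|k,k) /
(κ_B(t+q_{2k-2}|k-1)·κ_A(t|k))`, set to `0` whenever a denominator marginal vanishes. -/
def gFun (d m : ℕ) [NeZero d] (κ : ℕ → ℕ → ZMod d → ZMod d → ℝ)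
    (l : Fin (2 * m - 2) → ZMod d) (k : ℕ) (t : ZMod d) : ℝ :=
  if margB d κ (k - 1) (t + qOf d m l (2 * k - 2)) = 0 ∨ margA d κ k t = 0 then 0
  else κ k (k - 1) t (t + qOf d m l (2 * k - 2)) * κ k k t (t - qOf d m l (2 * k - 1)) /
    (margB d κ (k - 1) (t + qOf d m l (2 * k - 2)) * margA d κ k t)

/-- `𝓕^i_l(t) = κ_B(t+q_2|1)·Π_{k=2}^i g^k_l(t - c_k)`. -/
def FFun (d m : ℕ) [NeZero d] (κ : ℕ → ℕ → ZMod d → ZMod d → ℝ)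
    (l : Fin (2 * m - 2) → ZMod d) (i : ℕ) (t : ZMod d) : ℝ :=
  margB d κ 1 (t + qOf d m l 2) *
    ∏ k ∈ Finset.Icc 2 i, gFun d m κ l k (t - cOf d m l k)

end

/-!
Induction on `i`, starting from `i = 2`, where the sum has a single term. From `i` to `i + 1`:
the new factor `g^{i+1}` only involves `q_{2i}, q_{2i+1}`, and `c_{i+1} = c_i + q_{2i-1} + q_{2i}`,
so the sum over `q_2, …, q_{2i-3}` is the induction hypothesis at `s = t + q_{2i} + q_{2i-1}`.
Summing then over `q_{2i-2}`, the marginal `κ_B(· | i-1)` cancels the denominator of `g^i`, and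
no-signaling turns `Σ_q κ(s, s + q | i, i-1)` into `κ_A(s | i)`, leaving
`κ(s, s - q_{2i-1} | i, i)`; the final sum over `q_{2i-1}` is the marginal `κ_B(t + q_{2i} | i)`.
The zero convention in `g` is harmless because, by nonnegativity, a vanishing marginal forces
the matching entries of `κ` to vanish.
-/

open Finset

section AgreeFrom

variable {α : Type*} [Fintype α] [DecidableEq α] {N : ℕ}

def agreeFrom (n : ℕ) (l : Fin N → α) : Finset (Fin N → α) :=
  univ.filter fun l' => ∀ j : Fin N, n ≤ (j : ℕ) → l' j = l j

@[simp]
lemma mem_agreeFrom {n : ℕ} {l l' : Fin N → α} :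
    l' ∈ agreeFrom n l ↔ ∀ j : Fin N, n ≤ (j : ℕ) → l' j = l j := by
  simp [agreeFrom]

lemma agreeFrom_zero (l : Fin N → α) : agreeFrom 0 l = {l} := by
  ext l'
  simp [funext_iff]

lemma agreeFrom_update {n : ℕ} (hn : n < N) (l : Fin N → α) (x : α) :
    agreeFrom n (Function.update l ⟨n, hn⟩ x) =
      (agreeFrom (n + 1) l).filter fun l' => l' ⟨n, hn⟩ = x := by
  ext l'
  simp only [mem_agreeFrom, mem_filter, Function.update_apply]
  constructor
  · intro h
    refine ⟨fun j hj => ?_, by simpa using h ⟨n, hn⟩ le_rfl⟩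
    have hjn : j ≠ ⟨n, hn⟩ := Fin.ne_of_val_ne (by simp only; omega)
    simpa [hjn] using h j (by omega)
  · rintro ⟨h, rfl⟩ j hj
    split_ifs with hjn
    · rw [hjn]
    · exact h j (lt_of_le_of_ne hj (fun e => hjn (Fin.ext e.symm)))

lemma sum_agreeFrom_succ {M : Type*} [AddCommMonoid M] {n : ℕ} (hn : n < N)
    (l : Fin N → α) (f : (Fin N → α) → M) :
    ∑ l' ∈ agreeFrom (n + 1) l, f l' =
      ∑ x : α, ∑ l' ∈ agreeFrom n (Function.update l ⟨n, hn⟩ x), f l' := by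
  simp only [agreeFrom_update]
  exact (sum_fiberwise _ _ f).symm

end AgreeFrom

structure IsNonnegNoSignaling (d m : ℕ) [NeZero d] (κ : ℕ → ℕ → ZMod d → ZMod d → ℝ) :
    Prop where
  nonneg : ∀ x y, 2 ≤ x → x ≤ m → 1 ≤ y → y ≤ m → ∀ a b, 0 ≤ κ x y a b
  sum_right_indep : ∀ x y y', 2 ≤ x → x ≤ m → 1 ≤ y → y ≤ m → 1 ≤ y' → y' ≤ m → ∀ a,
    ∑ b : ZMod d, κ x y a b = ∑ b : ZMod d, κ x y' a b
  sum_left_indep : ∀ x x' y, 2 ≤ x → x ≤ m → 2 ≤ x' → x' ≤ m → 1 ≤ y → y ≤ m → ∀ b,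
    ∑ a : ZMod d, κ x y a b = ∑ a : ZMod d, κ x' y a b

namespace IsNonnegNoSignaling

variable {d m : ℕ} [NeZero d] {κ : ℕ → ℕ → ZMod d → ZMod d → ℝ} {x y : ℕ}

lemma margA_eq_sum (hκ : IsNonnegNoSignaling d m κ) (hx : 2 ≤ x) (hxm : x ≤ m)
    (hy : 1 ≤ y) (hym : y ≤ m) (a : ZMod d) : margA d κ x a = ∑ b, κ x y a b :=
  hκ.sum_right_indep x 1 y hx hxm le_rfl (hy.trans hym) hy hym a

lemma margB_eq_sum (hκ : IsNonnegNoSignaling d m κ) (hx : 2 ≤ x) (hxm : x ≤ m)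
    (hy : 1 ≤ y) (hym : y ≤ m) (b : ZMod d) : margB d κ y b = ∑ a, κ x y a b :=
  hκ.sum_left_indep 2 x y le_rfl (hx.trans hxm) hx hxm hy hym b

lemma eq_zero_of_margA_eq_zero (hκ : IsNonnegNoSignaling d m κ) (hx : 2 ≤ x) (hxm : x ≤ m)
    (hy : 1 ≤ y) (hym : y ≤ m) {a : ZMod d} (h : margA d κ x a = 0) (b : ZMod d) :
    κ x y a b = 0 := by
  rw [hκ.margA_eq_sum hx hxm hy hym] at h
  exact (sum_eq_zero_iff_of_nonneg fun b _ => hκ.nonneg x y hx hxm hy hym a b).mp h b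
    (mem_univ b)

lemma eq_zero_of_margB_eq_zero (hκ : IsNonnegNoSignaling d m κ) (hx : 2 ≤ x) (hxm : x ≤ m)
    (hy : 1 ≤ y) (hym : y ≤ m) {b : ZMod d} (h : margB d κ y b = 0) (a : ZMod d) :
    κ x y a b = 0 := by
  rw [hκ.margB_eq_sum hx hxm hy hym] at h
  exact (sum_eq_zero_iff_of_nonneg fun a _ => hκ.nonneg x y hx hxm hy hym a b).mp h a
    (mem_univ a)

lemma sum_add_left_eq_margB (hκ : IsNonnegNoSignaling d m κ) (hx : 2 ≤ x) (hxm : x ≤ m)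
    (u : ZMod d) : ∑ a : ZMod d, κ x x (u + a) u = margB d κ x u := by
  rw [hκ.margB_eq_sum hx hxm (by omega) hxm]
  exact Fintype.sum_equiv (Equiv.addLeft u) _ _ fun _ => rfl

end IsNonnegNoSignaling

section GFactor

variable {d m : ℕ} [NeZero d] {κ : ℕ → ℕ → ZMod d → ZMod d → ℝ}

noncomputable def gFactor (d : ℕ) [NeZero d] (κ : ℕ → ℕ → ZMod d → ZMod d → ℝ) (k : ℕ)
    (s q r : ZMod d) : ℝ :=
  if margB d κ (k - 1) (s + q) = 0 ∨ margA d κ k s = 0 then 0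
  else κ k (k - 1) s (s + q) * κ k k s (s - r) / (margB d κ (k - 1) (s + q) * margA d κ k s)

lemma gFun_eq_gFactor (l : Fin (2 * m - 2) → ZMod d) (k : ℕ) (t : ZMod d) :
    gFun d m κ l k t = gFactor d κ k t (qOf d m l (2 * k - 2)) (qOf d m l (2 * k - 1)) :=
  rfl

lemma margB_mul_gFactor (hκ : IsNonnegNoSignaling d m κ) {k : ℕ} (hk : 2 ≤ k) (hkm : k ≤ m)
    {s : ZMod d} (hA : margA d κ k s ≠ 0) (q r : ZMod d) :
    margB d κ (k - 1) (s + q) * gFactor d κ k s q r =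
      κ k (k - 1) s (s + q) * (κ k k s (s - r) / margA d κ k s) := by
  by_cases hB : margB d κ (k - 1) (s + q) = 0
  · rw [hκ.eq_zero_of_margB_eq_zero hk hkm (by omega) (by omega) hB]
    simp [gFactor, hB]
  · rw [gFactor, if_neg (not_or.mpr ⟨hB, hA⟩)]
    field_simp

lemma sum_margB_mul_gFactor (hκ : IsNonnegNoSignaling d m κ) {k : ℕ} (hk : 2 ≤ k)
    (hkm : k ≤ m) (s r : ZMod d) :
    ∑ q : ZMod d, margB d κ (k - 1) (s + q) * gFactor d κ k s q r = κ k k s (s - r) := by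
  by_cases hA : margA d κ k s = 0
  · simp [gFactor, hA, hκ.eq_zero_of_margA_eq_zero (y := k) hk hkm (by omega) hkm hA]
  · have hsum : ∑ q : ZMod d, κ k (k - 1) s (s + q) = margA d κ k s := by
      rw [hκ.margA_eq_sum (y := k - 1) hk hkm (by omega) (by omega)]
      exact Fintype.sum_equiv (Equiv.addLeft s) _ _ fun _ => rfl
    simp_rw [margB_mul_gFactor hκ hk hkm hA, ← sum_mul, hsum]
    exact mul_div_cancel₀ _ hA

end GFactor

section FFun

variable {d m : ℕ} {l l' : Fin (2 * m - 2) → ZMod d}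

lemma qOf_update (j : Fin (2 * m - 2)) (x : ZMod d) (i : ℕ) :
    qOf d m (Function.update l j x) i = if i - 2 = (j : ℕ) then x else qOf d m l i := by
  unfold qOf
  split_ifs with hi hij hij
  · rw [show (⟨i - 2, hi⟩ : Fin (2 * m - 2)) = j from Fin.ext hij, Function.update_self]
  · exact Function.update_of_ne (fun e => hij (congrArg Fin.val e)) _ _
  · exact absurd (hij ▸ j.isLt) hi
  · rfl

lemma cOf_two : cOf d m l 2 = 0 := rfl

lemma cOf_succ {i : ℕ} (hi : 2 ≤ i) :
    cOf d m l (i + 1) = cOf d m l i + qOf d m l (2 * i - 1) + qOf d m l (2 * i) := by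
  unfold cOf
  rw [show 2 * (i + 1) - 2 = 2 * i - 2 + 1 + 1 by omega, sum_Icc_succ_top (by omega),
    sum_Icc_succ_top (by omega), show 2 * i - 2 + 1 + 1 = 2 * i by omega,
    show 2 * i - 2 + 1 = 2 * i - 1 by omega]

variable [NeZero d]

lemma qOf_eq_of_mem_agreeFrom {n i : ℕ} (h : l' ∈ agreeFrom n l) (hi : n ≤ i - 2) :
    qOf d m l' i = qOf d m l i := by
  unfold qOf
  split_ifs with hlt
  · exact mem_agreeFrom.mp h _ hi
  · rfl

lemma qOf_of_mem_agreeFrom_update {n i : ℕ} (hn : n < 2 * m - 2) {y : ZMod d}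
    (h : l' ∈ agreeFrom n (Function.update l ⟨n, hn⟩ y)) (hi : n ≤ i - 2) :
    qOf d m l' i = if i - 2 = n then y else qOf d m l i := by
  rw [qOf_eq_of_mem_agreeFrom h hi, qOf_update]

variable {κ : ℕ → ℕ → ZMod d → ZMod d → ℝ}

lemma FFun_two (t : ZMod d) :
    FFun d m κ l 2 t = margB d κ 1 (t + qOf d m l 2) * gFun d m κ l 2 t := by
  simp [FFun, cOf_two]

lemma FFun_succ {i : ℕ} (hi : 1 ≤ i) (t : ZMod d) :
    FFun d m κ l (i + 1) t =
      FFun d m κ l i t * gFun d m κ l (i + 1) (t - cOf d m l (i + 1)) := by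
  rw [FFun, prod_Icc_succ_top (by omega), ← mul_assoc, FFun]

lemma FFun_succ_add_cOf {i : ℕ} (hi : 2 ≤ i) (t : ZMod d) :
    FFun d m κ l (i + 1) (t + cOf d m l (i + 1)) =
      FFun d m κ l i (t + qOf d m l (2 * i - 1) + qOf d m l (2 * i) + cOf d m l i) *
        gFun d m κ l (i + 1) t := by
  rw [FFun_succ (by omega), add_sub_cancel_right, cOf_succ hi]
  congr 2
  ring

end FFun

section PartialSum

variable {d m : ℕ} [NeZero d] {κ : ℕ → ℕ → ZMod d → ZMod d → ℝ}

lemma sum_agreeFrom_FFun_succ (hκ : IsNonnegNoSignaling d m κ) {i : ℕ} (hi : 2 ≤ i)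
    (him : i < m)
    (ih : ∀ (l : Fin (2 * m - 2) → ZMod d) (t : ZMod d),
      ∑ l' ∈ agreeFrom (2 * i - 4) l, FFun d m κ l' i (t + cOf d m l' i) =
        margB d κ (i - 1) (t + qOf d m l (2 * i - 2)) * gFun d m κ l i t)
    (l : Fin (2 * m - 2) → ZMod d) (t : ZMod d) :
    ∑ l' ∈ agreeFrom (2 * i - 2) l, FFun d m κ l' (i + 1) (t + cOf d m l' (i + 1)) =
      margB d κ i (t + qOf d m l (2 * i)) * gFun d m κ l (i + 1) t := by
  have hlt : 2 * i - 3 < 2 * m - 2 := by omega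
  have hlt' : 2 * i - 4 < 2 * m - 2 := by omega
  set q := qOf d m l (2 * i)
  have fiber : ∀ y : ZMod d,
      ∑ l' ∈ agreeFrom (2 * i - 3) (Function.update l ⟨2 * i - 3, hlt⟩ y),
        FFun d m κ l' (i + 1) (t + cOf d m l' (i + 1)) =
        κ i i (t + q + y) (t + q) * gFun d m κ l (i + 1) t := by
    intro y
    set l₁ := Function.update l ⟨2 * i - 3, hlt⟩ y with hl₁
    calc ∑ l' ∈ agreeFrom (2 * i - 3) l₁, FFun d m κ l' (i + 1) (t + cOf d m l' (i + 1))
        = (∑ l' ∈ agreeFrom (2 * i - 4 + 1) l₁, FFun d m κ l' i (t + q + y + cOf d m l' i)) *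
            gFun d m κ l (i + 1) t := by
          rw [sum_mul, show 2 * i - 4 + 1 = 2 * i - 3 by omega]
          refine sum_congr rfl fun l' hl' => ?_
          have hq : ∀ j, 2 * i - 1 ≤ j →
              qOf d m l' j = if j - 2 = 2 * i - 3 then y else qOf d m l j :=
            fun j hj => qOf_of_mem_agreeFrom_update hlt hl' (by omega)
          have hg : gFun d m κ l' (i + 1) t = gFun d m κ l (i + 1) t := by
            rw [gFun_eq_gFactor, gFun_eq_gFactor, hq (2 * (i + 1) - 2) (by omega),
              hq (2 * (i + 1) - 1) (by omega), if_neg (by omega), if_neg (by omega)]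
          rw [FFun_succ_add_cOf hi, hq _ le_rfl, hq (2 * i) (by omega), if_pos (by omega),
            if_neg (by omega), add_right_comm t, hg]
      _ = (∑ x : ZMod d, margB d κ (i - 1) (t + q + y + x) * gFactor d κ i (t + q + y) x y) *
            gFun d m κ l (i + 1) t := by
          rw [sum_agreeFrom_succ hlt']
          congr 1
          refine sum_congr rfl fun x _ => ?_
          rw [ih, gFun_eq_gFactor]
          simp (disch := omega) only [hl₁, qOf_update, if_pos, if_neg]
      _ = κ i i (t + q + y) (t + q) * gFun d m κ l (i + 1) t := by
          rw [sum_margB_mul_gFactor hκ hi him.le, add_sub_cancel_right]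
  rw [show 2 * i - 2 = 2 * i - 3 + 1 by omega, sum_agreeFrom_succ hlt]
  simp_rw [fiber, ← sum_mul]
  rw [hκ.sum_add_left_eq_margB hi him.le]

lemma sum_agreeFrom_FFun (hκ : IsNonnegNoSignaling d m κ) {i : ℕ} (hi : 2 ≤ i) (him : i ≤ m)
    (l : Fin (2 * m - 2) → ZMod d) (t : ZMod d) :
    ∑ l' ∈ agreeFrom (2 * i - 4) l, FFun d m κ l' i (t + cOf d m l' i) =
      margB d κ (i - 1) (t + qOf d m l (2 * i - 2)) * gFun d m κ l i t := by
  induction i, hi using Nat.le_induction generalizing l t with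
  | base => simp [agreeFrom_zero, cOf_two, FFun_two]
  | succ i hi ih =>
    rw [show 2 * (i + 1) - 4 = 2 * i - 2 by omega, show 2 * (i + 1) - 2 = 2 * i by omega,
      Nat.add_sub_cancel]
    exact sum_agreeFrom_FFun_succ hκ hi him (ih (by omega)) l t

end PartialSum

-- The sum over `q_2, …, q_{2i-3}` is the sum over the tuples `l'` that agree with `l` from
-- `q_{2i-2}` on, i.e. on the coordinates `j` with `2 * i ≤ j + 4`.
theorem FFun_partial_sum_general
    (d m : ℕ) [NeZero d]
    (κ : ℕ → ℕ → ZMod d → ZMod d → ℝ)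
    (hpos : ∀ x y, 2 ≤ x → x ≤ m → 1 ≤ y → y ≤ m → ∀ a b, 0 ≤ κ x y a b)
    (hnsA : ∀ x y y', 2 ≤ x → x ≤ m → 1 ≤ y → y ≤ m → 1 ≤ y' → y' ≤ m → ∀ a,
      ∑ b : ZMod d, κ x y a b = ∑ b : ZMod d, κ x y' a b)
    (hnsB : ∀ x x' y, 2 ≤ x → x ≤ m → 2 ≤ x' → x' ≤ m → 1 ≤ y → y ≤ m → ∀ b,
      ∑ a : ZMod d, κ x y a b = ∑ a : ZMod d, κ x' y a b) :
    ∀ (l : Fin (2 * m - 2) → ZMod d) (t : ZMod d) (i : ℕ), 3 ≤ i → i ≤ m →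
      ∑ l' ∈ Finset.univ.filter (fun l' : Fin (2 * m - 2) → ZMod d =>
          ∀ j : Fin (2 * m - 2), 2 * i ≤ (j : ℕ) + 4 → l' j = l j),
        FFun d m κ l' i (t + cOf d m l' i) =
      margB d κ (i - 1) (t + qOf d m l (2 * i - 2)) * gFun d m κ l i t := by
  intro l t i hi him
  have hκ : IsNonnegNoSignaling d m κ := ⟨hpos, hnsA, hnsB⟩
  have hset : Finset.univ.filter (fun l' : Fin (2 * m - 2) → ZMod d =>
      ∀ j : Fin (2 * m - 2), 2 * i ≤ (j : ℕ) + 4 → l' j = l j) = agreeFrom (2 * i - 4) l :=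
    filter_congr fun l' _ => forall_congr' fun j => imp_congr_left (by omega)
  rw [hset]
  exact sum_agreeFrom_FFun hκ (by omega) him l t

/-- for all `t`, `l` and `3 ≤ i ≤ m`,
`Σ_{q_2,...,q_{2i-3}} 𝓕^i_l(t + c_i) = κ_B(t + q_{2i-2}|i-1)·g^i_l(t)`.
The sum over `q_2, ..., q_{2i-3}` is expressed as a sum over tuples `l'` agreeing with
`l` on the coordinates `q_{2i-2}, ..., q_{2m-1}`. -/
theorem FFun_partial_sum
    (d m : ℕ) [NeZero d] (hd : 2 ≤ d) (hm : 2 ≤ m)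
    (κ : ℕ → ℕ → ZMod d → ZMod d → ℝ)
    (hpos : ∀ x y, 2 ≤ x → x ≤ m → 1 ≤ y → y ≤ m → ∀ a b, 0 ≤ κ x y a b)
    (hnorm : ∀ x y, 2 ≤ x → x ≤ m → 1 ≤ y → y ≤ m →
      ∑ a : ZMod d, ∑ b : ZMod d, κ x y a b = 1)
    (hnsA : ∀ x y y', 2 ≤ x → x ≤ m → 1 ≤ y → y ≤ m → 1 ≤ y' → y' ≤ m → ∀ a,
      ∑ b : ZMod d, κ x y a b = ∑ b : ZMod d, κ x y' a b)
    (hnsB : ∀ x x' y, 2 ≤ x → x ≤ m → 2 ≤ x' → x' ≤ m → 1 ≤ y → y ≤ m → ∀ b,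
      ∑ a : ZMod d, κ x y a b = ∑ a : ZMod d, κ x' y a b) :
    ∀ (l : Fin (2 * m - 2) → ZMod d) (t : ZMod d) (i : ℕ), 3 ≤ i → i ≤ m →
      ∑ l' ∈ Finset.univ.filter (fun l' : Fin (2 * m - 2) → ZMod d =>
          ∀ j : Fin (2 * m - 2), 2 * i ≤ (j : ℕ) + 4 → l' j = l j),
        FFun d m κ l' i (t + cOf d m l' i) =
      margB d κ (i - 1) (t + qOf d m l (2 * i - 2)) * gFun d m κ l i t :=
  FFun_partial_sum_general d m κ hpos hnsA hnsB
end

section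
/- Every no-signaling behavior κ ∈ NS(d,d,m-1,m) admits a decomposition of its chain-relevant probabilities as a convex mixture κ(t, t-q'_{2i-1}|i,i) = Σ_l f(l)·F_l(t, t-q'_{2i-1}|i,i) and κ(t, t+q'_{2i-2}|i,i-1) = Σ_l f(l)·F_l(t, t+q'_{2i-2}|i,i-1), where l ranges over ℤ_d^{2m-2}, f(l) := Σ_t 𝓕^m_l(t) satisfies f(l) ≥ 0 and Σ_l f(l) = 1, and each F_l is a valid (normalized, nonnegative) behavior whose chain-relevant distributions are concentrated on outcome pairs with fixed differences given by l: F_l(a,b|i,i) = 0 unless a - b ≡ q_{2i-1} (mod d), and F_l(a,b|i,i-1) = 0 unless b - a ≡ q_{2i-2} (mod d). -/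
open scoped BigOperators

/-!
Order the outputs along the chain `b₁, a₂, b₂, a₃, …, a_m, b_m`. Consecutive outputs are jointly
distributed by `κ(·,·|k,k-1)` or `κ(·,·|k,k)`, and no-signaling says that neighbouring pairs have
the same marginal on their common output. For such a consistent family of pair laws, the Markov
chain started from the first marginal, with the conditional laws as transitions, has each pair law
as the law of the corresponding two consecutive steps. A path is determined by `t = a₂` and its
successive differences `l = (q₂, …, q_{2m-1})`, and its probability is `𝓕^m_l(t)`; grouping the
paths by `l` writes each `κ(·,·|i,i)` and `κ(·,·|i,i-1)` as the `f(l)`-mixture of the path laws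
`F_l`, whose differences are fixed.
-/

open Finset

noncomputable section MarkovChain

variable {α : Type*} [Fintype α]

lemma Fin.sum_pi_snoc {M : Type*} [AddCommMonoid M] {n : ℕ} (f : (Fin (n + 1) → α) → M) :
    ∑ w, f w = ∑ v : Fin n → α, ∑ x, f (Fin.snoc v x) := by
  rw [← Fintype.sum_equiv (Fin.snocEquiv fun _ => α) _ _ (fun _ => rfl), Fintype.sum_prod_type,
    Finset.sum_comm]
  rfl

def leftMarg (P : ℕ → α → α → ℝ) (j : ℕ) (x : α) : ℝ := ∑ y, P j x y

def rightMarg (P : ℕ → α → α → ℝ) (j : ℕ) (y : α) : ℝ := ∑ x, P j x y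

def chainWeight (P : ℕ → α → α → ℝ) (n : ℕ) (w : Fin (n + 1) → α) : ℝ :=
  leftMarg P 0 (w 0) *
    ∏ j : Fin n, P j (w j.castSucc) (w j.succ) / leftMarg P j (w j.castSucc)

variable {P : ℕ → α → α → ℝ}

lemma chainWeight_snoc (n : ℕ) (w : Fin (n + 1) → α) (x : α) :
    chainWeight P (n + 1) (Fin.snoc w x) =
      chainWeight P n w * (P n (w (Fin.last n)) x / leftMarg P n (w (Fin.last n))) := by
  simp only [chainWeight, Fin.prod_univ_castSucc, Fin.snoc_castSucc, Fin.succ_last,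
    Fin.snoc_last, Fin.succ_castSucc, Fin.val_castSucc, Fin.val_last]
  rw [show (0 : Fin (n + 2)) = Fin.castSucc 0 from rfl, Fin.snoc_castSucc, mul_assoc]

lemma sum_chainWeight_succ (n : ℕ) (h : α → α → ℝ) :
    ∑ w : Fin (n + 2) → α, chainWeight P (n + 1) w * h (w (Fin.last n).castSucc) (w (Fin.last _)) =
      ∑ v : Fin (n + 1) → α, chainWeight P n v *
        ∑ y, P n (v (Fin.last n)) y / leftMarg P n (v (Fin.last n)) * h (v (Fin.last n)) y := by
  rw [Fin.sum_pi_snoc]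
  refine sum_congr rfl fun v _ => ?_
  rw [mul_sum]
  refine sum_congr rfl fun y _ => ?_
  rw [chainWeight_snoc, Fin.snoc_castSucc, Fin.snoc_last, mul_assoc]

lemma leftMarg_mul_div_cancel {j : ℕ} (hP : ∀ x y, 0 ≤ P j x y) (x y : α) :
    leftMarg P j x * (P j x y / leftMarg P j x) = P j x y := by
  rcases eq_or_ne (leftMarg P j x) 0 with h | h
  · have : P j x y ≤ leftMarg P j x := single_le_sum (fun y _ => hP x y) (mem_univ y)
    rw [h, zero_mul]
    exact le_antisymm (hP x y) (h ▸ this)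
  · exact mul_div_cancel₀ _ h

variable {n : ℕ} (hP : ∀ j < n, ∀ x y, 0 ≤ P j x y)
  (hcons : ∀ j, j + 1 < n → ∀ y, rightMarg P j y = leftMarg P (j + 1) y)
include hP

lemma chainWeight_nonneg (hn : 0 < n) {k : ℕ} (hk : k ≤ n) (w : Fin (k + 1) → α) :
    0 ≤ chainWeight P k w :=
  mul_nonneg (sum_nonneg fun y _ => hP 0 (by omega) _ y) <| prod_nonneg fun j _ =>
    div_nonneg (hP j (by omega) _ _) (sum_nonneg fun y _ => hP j (by omega) _ y)

include hcons

lemma sum_chainWeight_mul_last {k : ℕ} (hk : k < n) (h : α → ℝ) :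
    ∑ w : Fin (k + 1) → α, chainWeight P k w * h (w (Fin.last k)) = ∑ x, leftMarg P k x * h x := by
  induction k generalizing h with
  | zero =>
    exact Fintype.sum_equiv (Equiv.funUnique (Fin 1) α) _ _
      (fun w => by simp [chainWeight, Fin.last])
  | succ k ih =>
    rw [sum_chainWeight_succ k (fun _ y => h y),
      ih (by omega) (fun x => ∑ y, P k x y / leftMarg P k x * h y)]
    simp_rw [mul_sum, ← mul_assoc, leftMarg_mul_div_cancel (hP k (by omega))]
    rw [sum_comm]
    simp_rw [← sum_mul]
    exact sum_congr rfl fun y _ => by rw [← rightMarg, hcons k hk y]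

lemma sum_chainWeight_mul_last_edge {k : ℕ} (hk : k < n) (h : α → α → ℝ) :
    ∑ w : Fin (k + 2) → α, chainWeight P (k + 1) w * h (w (Fin.last k).castSucc) (w (Fin.last _)) =
      ∑ x, ∑ y, P k x y * h x y := by
  rw [sum_chainWeight_succ, sum_chainWeight_mul_last hP hcons hk
    (fun x => ∑ y, P k x y / leftMarg P k x * h x y)]
  simp_rw [mul_sum, ← mul_assoc, leftMarg_mul_div_cancel (hP k hk)]

lemma chainWeight_eq_zero_of_leftMarg_eq_zero {k : ℕ} (hk : k < n) (w : Fin (k + 1) → α)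
    (hw : leftMarg P k (w (Fin.last k)) = 0) : chainWeight P k w = 0 := by
  classical
  have hsum := sum_chainWeight_mul_last hP hcons hk (fun x => if x = w (Fin.last k) then 1 else 0)
  simp only [mul_ite, mul_one, mul_zero, sum_ite_eq', mem_univ, if_true, hw] at hsum
  have := (sum_eq_zero_iff_of_nonneg fun v _ => ?_).1 hsum w (mem_univ w)
  · simpa using this
  · split_ifs
    · simpa using chainWeight_nonneg hP (by omega) hk.le v
    · exact le_rfl

lemma sum_chainWeight_succ_mul_init {N : ℕ} (hN : N < n) (φ : (Fin (N + 1) → α) → ℝ) :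
    ∑ w : Fin (N + 2) → α, chainWeight P (N + 1) w * φ (Fin.init w) =
      ∑ v, chainWeight P N v * φ v := by
  rw [Fin.sum_pi_snoc]
  refine sum_congr rfl fun v _ => ?_
  simp_rw [chainWeight_snoc, Fin.init_snoc, mul_right_comm _ _ (φ v), ← mul_sum, ← sum_div]
  rcases eq_or_ne (leftMarg P N (v (Fin.last N))) 0 with h | h
  · rw [chainWeight_eq_zero_of_leftMarg_eq_zero hP hcons hN v h, zero_mul, zero_mul]
  · rw [← leftMarg, div_self h, mul_one]

theorem sum_chainWeight_mul_edge {N k : ℕ} (hN : N ≤ n) (hk : k < N) (h : α → α → ℝ) :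
    ∑ w : Fin (N + 1) → α, chainWeight P N w * h (w ⟨k, by omega⟩) (w ⟨k + 1, by omega⟩) =
      ∑ x, ∑ y, P k x y * h x y := by
  induction N, hk using Nat.le_induction with
  | base => exact sum_chainWeight_mul_last_edge hP hcons (by omega) h
  | succ N hkN ih =>
    rw [← ih (by omega)]
    exact sum_chainWeight_succ_mul_init hP hcons (by omega)
      (fun v => h (v ⟨k, by omega⟩) (v ⟨k + 1, by omega⟩))

end MarkovChain

lemma Finset.prod_range_two_mul {M : Type*} [CommMonoid M] (f : ℕ → M) (n : ℕ) :
    ∏ j ∈ range (2 * n), f j = ∏ k ∈ range n, f (2 * k) * f (2 * k + 1) := by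
  induction n with
  | zero => simp
  | succ n ih => rw [Nat.mul_succ, prod_range_succ, prod_range_succ, prod_range_succ, ih, mul_assoc]

section Normalize

variable {ι : Type*} [Fintype ι] {g : ι → ℝ}

noncomputable def normalizeOrUniform (g : ι → ℝ) (i : ι) : ℝ :=
  if ∑ j, g j = 0 then (Fintype.card ι : ℝ)⁻¹ else g i / ∑ j, g j

lemma normalizeOrUniform_nonneg (hg : ∀ i, 0 ≤ g i) (i : ι) : 0 ≤ normalizeOrUniform g i := by
  unfold normalizeOrUniform
  split_ifs
  · positivity
  · exact div_nonneg (hg i) (sum_nonneg fun j _ => hg j)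

lemma sum_normalizeOrUniform [Nonempty ι] (g : ι → ℝ) : ∑ i, normalizeOrUniform g i = 1 := by
  unfold normalizeOrUniform
  split_ifs with h
  · simp
  · rw [← sum_div, div_self h]

lemma sum_mul_normalizeOrUniform (hg : ∀ i, 0 ≤ g i) (i : ι) :
    (∑ j, g j) * normalizeOrUniform g i = g i := by
  unfold normalizeOrUniform
  split_ifs with h
  · rw [h, zero_mul, (sum_eq_zero_iff_of_nonneg fun j _ => hg j).1 h i (mem_univ i)]
  · exact mul_div_cancel₀ _ h

end Normalize

/-- Along `b₁, a₂, b₂, a₃, …, a_m, b_m`, edge `2k` is `(b_{k+1}, a_{k+2})` with law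
`κ(·,·|k+2,k+1)` (arguments swapped) and edge `2k+1` is `(a_{k+2}, b_{k+2})` with law
`κ(·,·|k+2,k+2)`. -/
def chainEdge {α : Type*} (κ : ℕ → ℕ → α → α → ℝ) (j : ℕ) (u v : α) : ℝ :=
  if Even j then κ (j / 2 + 2) (j / 2 + 1) v u else κ (j / 2 + 2) (j / 2 + 2) u v

section ChainEdge

variable {α : Type*} {κ : ℕ → ℕ → α → α → ℝ}

@[simp]
lemma chainEdge_two_mul (k : ℕ) (u v : α) : chainEdge κ (2 * k) u v = κ (k + 2) (k + 1) v u := by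
  simp [chainEdge]

@[simp]
lemma chainEdge_two_mul_add_one (k : ℕ) (u v : α) :
    chainEdge κ (2 * k + 1) u v = κ (k + 2) (k + 2) u v := by
  simp [chainEdge, Nat.add_div_of_dvd_right]

end ChainEdge

/-- The outputs `b₁, a₂, b₂, …` of the chain as a path with `a₂ = t` and successive differences
`q₂, q₃, …` (each entry minus the next). -/
def chainPath (d m : ℕ) (l : Fin (2 * m - 2) → ZMod d) (t : ZMod d) (j : ℕ) : ZMod d :=
  t + qOf d m l 2 - ∑ c ∈ range j, qOf d m l (c + 2)

section ChainPath

variable {d m : ℕ} (l : Fin (2 * m - 2) → ZMod d) (t : ZMod d)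

lemma qOf_add_two (c : Fin (2 * m - 2)) : qOf d m l (c + 2) = l c := by
  simp [qOf]

lemma chainPath_succ (j : ℕ) :
    chainPath d m l t (j + 1) = chainPath d m l t j - qOf d m l (j + 2) := by
  rw [chainPath, chainPath, sum_range_succ, sub_add_eq_sub_sub]

lemma chainPath_one : chainPath d m l t 1 = t := by
  simp [chainPath]

lemma chainPath_two_mul_add_one (k : ℕ) :
    chainPath d m l t (2 * k + 1) = t - cOf d m l (k + 2) := by
  rw [chainPath, cOf, sum_range_succ', show 2 * (k + 2) - 2 = 2 * k + 2 by omega,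
    ← Ico_add_one_right_eq_Icc, sum_Ico_eq_sum_range, show 2 * k + 2 + 1 - 3 = 2 * k by omega]
  simp only [add_comm 3, add_assoc]
  ring

lemma chainPath_two_mul (k : ℕ) :
    chainPath d m l t (2 * k) = t - cOf d m l (k + 2) + qOf d m l (2 * k + 2) := by
  rw [← chainPath_two_mul_add_one, chainPath_succ, sub_add_cancel]

lemma chainPath_two_mul_add_two (k : ℕ) :
    chainPath d m l t (2 * k + 2) = t - cOf d m l (k + 2) - qOf d m l (2 * k + 3) := by
  rw [chainPath_succ, chainPath_two_mul_add_one]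

end ChainPath

def chainShift (d m : ℕ) (l : Fin (2 * m - 2) → ZMod d) (x y : ℕ) : ZMod d :=
  if y = x then qOf d m l (2 * x - 1) else if y + 1 = x then -qOf d m l (2 * x - 2) else 0

/-- The paper's `F_l`, extended to the inputs off the chain by `b = a`. -/
noncomputable def chainBehavior (d m : ℕ) [NeZero d] (κ : ℕ → ℕ → ZMod d → ZMod d → ℝ)
    (l : Fin (2 * m - 2) → ZMod d) (x y : ℕ) (a b : ZMod d) : ℝ :=
  normalizeOrUniform (FFun d m κ l m) (a + cOf d m l x) *
    if b = a - chainShift d m l x y then 1 else 0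

section ChainBehavior

variable {d m : ℕ} [NeZero d] {κ : ℕ → ℕ → ZMod d → ZMod d → ℝ} (l : Fin (2 * m - 2) → ZMod d)

lemma chainBehavior_nonneg (hF : ∀ t, 0 ≤ FFun d m κ l m t) (x y : ℕ) (a b : ZMod d) :
    0 ≤ chainBehavior d m κ l x y a b :=
  mul_nonneg (normalizeOrUniform_nonneg hF _) (by split_ifs <;> norm_num)

lemma sum_sum_chainBehavior (x y : ℕ) : ∑ a, ∑ b, chainBehavior d m κ l x y a b = 1 := by
  simp only [chainBehavior, mul_ite, mul_one, mul_zero, sum_ite_eq', mem_univ, if_true]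
  exact (Fintype.sum_equiv (Equiv.addRight _) _ _ fun _ => rfl).trans (sum_normalizeOrUniform _)

lemma chainBehavior_diag_eq_zero {i : ℕ} {a b : ZMod d} (hab : a - b ≠ qOf d m l (2 * i - 1)) :
    chainBehavior d m κ l i i a b = 0 := by
  rw [chainBehavior, chainShift, if_pos rfl, if_neg fun h => hab (by rw [h]; ring), mul_zero]

lemma chainBehavior_subdiag_eq_zero {i : ℕ} (hi : 1 ≤ i) {a b : ZMod d}
    (hab : b - a ≠ qOf d m l (2 * i - 2)) : chainBehavior d m κ l i (i - 1) a b = 0 := by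
  rw [chainBehavior, chainShift, if_neg (show i - 1 ≠ i by omega),
    if_pos (show i - 1 + 1 = i by omega), if_neg fun h => hab (by rw [h]; ring), mul_zero]

end ChainBehavior

section ChainDecomposition

variable {d m : ℕ} {κ : ℕ → ℕ → ZMod d → ZMod d → ℝ}
  (hpos : ∀ x y, 2 ≤ x → x ≤ m → 1 ≤ y → y ≤ m → ∀ a b, 0 ≤ κ x y a b)

include hpos in
lemma chainEdge_nonneg : ∀ j < 2 * m - 2, ∀ u v, 0 ≤ chainEdge κ j u v := by
  intro j hj u v
  obtain ⟨k, rfl | rfl⟩ := Nat.even_or_odd' j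
  · simpa using hpos (k + 2) (k + 1) (by omega) (by omega) (by omega) (by omega) v u
  · simpa using hpos (k + 2) (k + 2) (by omega) (by omega) (by omega) (by omega) u v

lemma chainPath_injective (hm : 2 ≤ m) :
    Function.Injective fun p : (Fin (2 * m - 2) → ZMod d) × ZMod d =>
      fun j : Fin (2 * m - 2 + 1) => chainPath d m p.1 p.2 j := by
  rintro ⟨l, t⟩ ⟨l', t'⟩ h
  have hpath (j : ℕ) (hj : j < 2 * m - 2 + 1) : chainPath d m l t j = chainPath d m l' t' j :=
    congrFun h ⟨j, hj⟩
  have hl : l = l' := funext fun c => by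
    have := hpath (c + 1) (by omega)
    rw [chainPath_succ, chainPath_succ, hpath c (by omega), qOf_add_two, qOf_add_two] at this
    exact sub_right_injective this
  have ht : t = t' := by simpa only [chainPath_one] using hpath 1 (by omega)
  rw [hl, ht]

variable [NeZero d]

lemma sum_sum_chainPath (hm : 2 ≤ m) (G : (Fin (2 * m - 2 + 1) → ZMod d) → ℝ) :
    ∑ l, ∑ t, G (fun j => chainPath d m l t j) = ∑ w, G w := by
  rw [← Fintype.sum_prod_type']
  refine Fintype.sum_bijective _ ((Fintype.bijective_iff_injective_and_card _).2
    ⟨chainPath_injective hm, ?_⟩) _ _ fun _ => rfl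
  simp [Fintype.card_prod, pow_succ]

lemma gFun_add_two (l : Fin (2 * m - 2) → ZMod d) (k : ℕ) (s : ZMod d) :
    gFun d m κ l (k + 2) s =
      κ (k + 2) (k + 1) s (s + qOf d m l (2 * k + 2)) /
          margB d κ (k + 1) (s + qOf d m l (2 * k + 2)) *
        (κ (k + 2) (k + 2) s (s - qOf d m l (2 * k + 3)) / margA d κ (k + 2) s) := by
  rw [gFun, show 2 * (k + 2) - 2 = 2 * k + 2 by omega, show 2 * (k + 2) - 1 = 2 * k + 3 by omega,
    show k + 2 - 1 = k + 1 by omega, div_mul_div_comm]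
  -- division by zero already produces the junk value `0` of `gFun`
  split_ifs with h
  · rcases h with h | h <;> simp [h]
  · rfl

variable (hnsA : ∀ x y y', 2 ≤ x → x ≤ m → 1 ≤ y → y ≤ m → 1 ≤ y' → y' ≤ m → ∀ a,
    ∑ b : ZMod d, κ x y a b = ∑ b : ZMod d, κ x y' a b)
  (hnsB : ∀ x x' y, 2 ≤ x → x ≤ m → 2 ≤ x' → x' ≤ m → 1 ≤ y → y ≤ m → ∀ b,
    ∑ a : ZMod d, κ x y a b = ∑ a : ZMod d, κ x' y a b)

include hnsB in
lemma leftMarg_chainEdge_two_mul {k : ℕ} (hk : k + 2 ≤ m) (u : ZMod d) :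
    leftMarg (chainEdge κ) (2 * k) u = margB d κ (k + 1) u := by
  simpa [leftMarg, margB] using
    hnsB (k + 2) 2 (k + 1) (by omega) hk le_rfl (by omega) (by omega) (by omega) u

include hnsA in
lemma leftMarg_chainEdge_two_mul_add_one {k : ℕ} (hk : k + 2 ≤ m) (u : ZMod d) :
    leftMarg (chainEdge κ) (2 * k + 1) u = margA d κ (k + 2) u := by
  simpa [leftMarg, margA] using
    hnsA (k + 2) (k + 2) 1 (by omega) hk (by omega) hk le_rfl (by omega) u

include hnsA hnsB in
lemma chainEdge_consistent :
    ∀ j, j + 1 < 2 * m - 2 → ∀ v,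
      rightMarg (chainEdge κ) j v = leftMarg (chainEdge κ) (j + 1) v := by
  intro j hj v
  obtain ⟨k, rfl | rfl⟩ := Nat.even_or_odd' j
  · rw [leftMarg_chainEdge_two_mul_add_one hnsA (by omega)]
    simpa [rightMarg, margA, margB] using
      hnsA (k + 2) (k + 1) 1 (by omega) (by omega) (by omega) (by omega) le_rfl (by omega) v
  · rw [show 2 * k + 1 + 1 = 2 * (k + 1) by ring, leftMarg_chainEdge_two_mul hnsB (by omega)]
    simpa [rightMarg, margA, margB] using
      hnsB (k + 2) 2 (k + 2) (by omega) (by omega) le_rfl (by omega) (by omega) (by omega) v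

include hnsA hnsB in
lemma FFun_eq_chainWeight (hm : 2 ≤ m) (l : Fin (2 * m - 2) → ZMod d) (t : ZMod d) :
    FFun d m κ l m t = chainWeight (chainEdge κ) (2 * m - 2) (fun j => chainPath d m l t j) := by
  simp only [FFun, chainWeight, Fin.val_castSucc, Fin.val_succ]
  rw [← Finset.Ico_add_one_right_eq_Icc, prod_Ico_eq_prod_range,
    Fin.prod_univ_eq_prod_range (fun j => chainEdge κ j (chainPath d m l t j)
      (chainPath d m l t (j + 1)) / leftMarg (chainEdge κ) j (chainPath d m l t j)),
    show 2 * m - 2 = 2 * (m + 1 - 2) by omega, prod_range_two_mul]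
  congr 1
  · simpa [chainPath] using (leftMarg_chainEdge_two_mul hnsB (k := 0) (by omega) _).symm
  · refine prod_congr rfl fun k hk => ?_
    have hk : k + 2 ≤ m := by simp at hk; omega
    rw [add_comm 2, gFun_add_two, chainPath_two_mul, chainPath_two_mul_add_one,
      chainPath_two_mul_add_two, leftMarg_chainEdge_two_mul hnsB hk,
      leftMarg_chainEdge_two_mul_add_one hnsA hk, chainEdge_two_mul, chainEdge_two_mul_add_one]

include hpos hnsA hnsB in
theorem sum_sum_FFun_mul_edge (hm : 2 ≤ m) {j : ℕ} (hj : j < 2 * m - 2)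
    (h : ZMod d → ZMod d → ℝ) :
    ∑ l, ∑ t, FFun d m κ l m t * h (chainPath d m l t j) (chainPath d m l t (j + 1)) =
      ∑ u, ∑ v, chainEdge κ j u v * h u v := by
  simp_rw [FFun_eq_chainWeight hnsA hnsB hm]
  rw [sum_sum_chainPath hm (fun w => chainWeight (chainEdge κ) (2 * m - 2) w *
    h (w ⟨j, by omega⟩) (w ⟨j + 1, by omega⟩))]
  exact sum_chainWeight_mul_edge (chainEdge_nonneg hpos) (chainEdge_consistent hnsA hnsB)
    le_rfl hj h

include hpos hnsA hnsB in
lemma FFun_nonneg (hm : 2 ≤ m) (l : Fin (2 * m - 2) → ZMod d) (t : ZMod d) :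
    0 ≤ FFun d m κ l m t :=
  FFun_eq_chainWeight hnsA hnsB hm l t ▸
    chainWeight_nonneg (chainEdge_nonneg hpos) (by omega) le_rfl _

include hpos hnsA hnsB in
lemma sum_sum_FFun_eq_one (hm : 2 ≤ m)
    (hnorm : ∀ x y, 2 ≤ x → x ≤ m → 1 ≤ y → y ≤ m → ∑ a : ZMod d, ∑ b : ZMod d, κ x y a b = 1) :
    ∑ l, ∑ t, FFun d m κ l m t = 1 := by
  have h := sum_sum_FFun_mul_edge hpos hnsA hnsB hm (j := 0) (by omega) fun _ _ => 1
  simp only [mul_one, chainEdge, Even.zero, if_true, Nat.zero_div] at h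
  rw [h, sum_comm]
  exact hnorm 2 1 le_rfl hm le_rfl (by omega)

include hpos hnsA hnsB in
lemma sum_FFun_mul_ite_diag (hm : 2 ≤ m) {i : ℕ} (hi : 2 ≤ i) (him : i ≤ m) (a b : ZMod d) :
    ∑ l, FFun d m κ l m (a + cOf d m l i) * (if b = a - qOf d m l (2 * i - 1) then 1 else 0) =
      κ i i a b := by
  obtain ⟨k, rfl⟩ : ∃ k, i = k + 2 := ⟨i - 2, by omega⟩
  have := sum_sum_FFun_mul_edge hpos hnsA hnsB hm (j := 2 * k + 1) (by omega)
    fun u v => if u = a ∧ b = v then 1 else 0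
  rw [show 2 * (k + 2) - 1 = 2 * k + 3 by omega]
  simpa [chainPath_two_mul_add_one, chainPath_two_mul_add_two, sub_eq_iff_eq_add, ite_and]
    using this

include hpos hnsA hnsB in
lemma sum_FFun_mul_ite_subdiag (hm : 2 ≤ m) {i : ℕ} (hi : 2 ≤ i) (him : i ≤ m) (a b : ZMod d) :
    ∑ l, FFun d m κ l m (a + cOf d m l i) * (if b = a + qOf d m l (2 * i - 2) then 1 else 0) =
      κ i (i - 1) a b := by
  obtain ⟨k, rfl⟩ : ∃ k, i = k + 2 := ⟨i - 2, by omega⟩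
  have := sum_sum_FFun_mul_edge hpos hnsA hnsB hm (j := 2 * k) (by omega)
    fun u v => if v = a ∧ b = u then 1 else 0
  rw [show 2 * (k + 2) - 2 = 2 * k + 2 by omega, show k + 2 - 1 = k + 1 by omega]
  simpa [chainPath_two_mul, chainPath_two_mul_add_one, sub_eq_iff_eq_add, ite_and] using this

include hpos hnsA hnsB in
lemma sum_mul_chainBehavior_diag (hm : 2 ≤ m) {i : ℕ} (hi : 2 ≤ i) (him : i ≤ m) (a b : ZMod d) :
    ∑ l, (∑ t, FFun d m κ l m t) * chainBehavior d m κ l i i a b = κ i i a b := by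
  rw [← sum_FFun_mul_ite_diag hpos hnsA hnsB hm hi him a b]
  refine sum_congr rfl fun l _ => ?_
  rw [chainBehavior, chainShift, if_pos rfl, ← mul_assoc,
    sum_mul_normalizeOrUniform (FFun_nonneg hpos hnsA hnsB hm l)]

include hpos hnsA hnsB in
lemma sum_mul_chainBehavior_subdiag (hm : 2 ≤ m) {i : ℕ} (hi : 2 ≤ i) (him : i ≤ m)
    (a b : ZMod d) :
    ∑ l, (∑ t, FFun d m κ l m t) * chainBehavior d m κ l i (i - 1) a b = κ i (i - 1) a b := by
  rw [← sum_FFun_mul_ite_subdiag hpos hnsA hnsB hm hi him a b]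
  refine sum_congr rfl fun l _ => ?_
  rw [chainBehavior, chainShift, if_neg (show i - 1 ≠ i by omega),
    if_pos (show i - 1 + 1 = i by omega), sub_neg_eq_add, ← mul_assoc,
    sum_mul_normalizeOrUniform (FFun_nonneg hpos hnsA hnsB hm l)]

end ChainDecomposition

theorem ns_behavior_chain_decomposition_general
    (d m : ℕ) [NeZero d] (hm : 2 ≤ m)
    (κ : ℕ → ℕ → ZMod d → ZMod d → ℝ)
    (hpos : ∀ x y, 2 ≤ x → x ≤ m → 1 ≤ y → y ≤ m → ∀ a b, 0 ≤ κ x y a b)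
    (hnorm : ∀ x y, 2 ≤ x → x ≤ m → 1 ≤ y → y ≤ m →
      ∑ a : ZMod d, ∑ b : ZMod d, κ x y a b = 1)
    (hnsA : ∀ x y y', 2 ≤ x → x ≤ m → 1 ≤ y → y ≤ m → 1 ≤ y' → y' ≤ m → ∀ a,
      ∑ b : ZMod d, κ x y a b = ∑ b : ZMod d, κ x y' a b)
    (hnsB : ∀ x x' y, 2 ≤ x → x ≤ m → 2 ≤ x' → x' ≤ m → 1 ≤ y → y ≤ m → ∀ b,
      ∑ a : ZMod d, κ x y a b = ∑ a : ZMod d, κ x' y a b) :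
    ∃ F : (Fin (2 * m - 2) → ZMod d) → ℕ → ℕ → ZMod d → ZMod d → ℝ,
      (∀ l : Fin (2 * m - 2) → ZMod d, 0 ≤ ∑ t : ZMod d, FFun d m κ l m t) ∧
      (∑ l : Fin (2 * m - 2) → ZMod d, ∑ t : ZMod d, FFun d m κ l m t = 1) ∧
      (∀ l x y, 2 ≤ x → x ≤ m → 1 ≤ y → y ≤ m →
        (∀ a b, 0 ≤ F l x y a b) ∧ ∑ a : ZMod d, ∑ b : ZMod d, F l x y a b = 1) ∧
      (∀ l i, 2 ≤ i → i ≤ m → ∀ a b : ZMod d,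
        a - b ≠ qOf d m l (2 * i - 1) → F l i i a b = 0) ∧
      (∀ l i, 2 ≤ i → i ≤ m → ∀ a b : ZMod d,
        b - a ≠ qOf d m l (2 * i - 2) → F l i (i - 1) a b = 0) ∧
      (∀ i, 2 ≤ i → i ≤ m → ∀ a b : ZMod d,
        κ i i a b =
          ∑ l : Fin (2 * m - 2) → ZMod d, (∑ t : ZMod d, FFun d m κ l m t) * F l i i a b ∧
        κ i (i - 1) a b =
          ∑ l : Fin (2 * m - 2) → ZMod d,
            (∑ t : ZMod d, FFun d m κ l m t) * F l i (i - 1) a b) := by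
  have hF := FFun_nonneg hpos hnsA hnsB hm
  refine ⟨chainBehavior d m κ, fun l => sum_nonneg fun t _ => hF l t,
    sum_sum_FFun_eq_one hpos hnsA hnsB hm hnorm,
    fun l x y _ _ _ _ => ⟨chainBehavior_nonneg l (hF l) x y, sum_sum_chainBehavior l x y⟩,
    fun l i _ _ _ _ => chainBehavior_diag_eq_zero l,
    fun l i hi _ _ _ => chainBehavior_subdiag_eq_zero l (by omega),
    fun i hi him a b => ⟨(sum_mul_chainBehavior_diag hpos hnsA hnsB hm hi him a b).symm,
      (sum_mul_chainBehavior_subdiag hpos hnsA hnsB hm hi him a b).symm⟩⟩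

/-- every no-signaling behavior `κ ∈ NS(d,d,m-1,m)` admits a convex
decomposition of its chain-relevant probabilities: with weights `f(l) = Σ_t 𝓕^m_l(t)`
(nonnegative, summing to 1) there are valid behaviors `F_l` concentrated on outcome
pairs with fixed differences given by `l` such that
`κ(·,·|i,i) = Σ_l f(l) F_l(·,·|i,i)` and `κ(·,·|i,i-1) = Σ_l f(l) F_l(·,·|i,i-1)`. -/
theorem ns_behavior_chain_decomposition
    (d m : ℕ) [NeZero d] (hd : 2 ≤ d) (hm : 2 ≤ m)
    (κ : ℕ → ℕ → ZMod d → ZMod d → ℝ)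
    (hpos : ∀ x y, 2 ≤ x → x ≤ m → 1 ≤ y → y ≤ m → ∀ a b, 0 ≤ κ x y a b)
    (hnorm : ∀ x y, 2 ≤ x → x ≤ m → 1 ≤ y → y ≤ m →
      ∑ a : ZMod d, ∑ b : ZMod d, κ x y a b = 1)
    (hnsA : ∀ x y y', 2 ≤ x → x ≤ m → 1 ≤ y → y ≤ m → 1 ≤ y' → y' ≤ m → ∀ a,
      ∑ b : ZMod d, κ x y a b = ∑ b : ZMod d, κ x y' a b)
    (hnsB : ∀ x x' y, 2 ≤ x → x ≤ m → 2 ≤ x' → x' ≤ m → 1 ≤ y → y ≤ m → ∀ b,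
      ∑ a : ZMod d, κ x y a b = ∑ a : ZMod d, κ x' y a b) :
    ∃ F : (Fin (2 * m - 2) → ZMod d) → ℕ → ℕ → ZMod d → ZMod d → ℝ,
      (∀ l : Fin (2 * m - 2) → ZMod d, 0 ≤ ∑ t : ZMod d, FFun d m κ l m t) ∧
      (∑ l : Fin (2 * m - 2) → ZMod d, ∑ t : ZMod d, FFun d m κ l m t = 1) ∧
      (∀ l x y, 2 ≤ x → x ≤ m → 1 ≤ y → y ≤ m →
        (∀ a b, 0 ≤ F l x y a b) ∧ ∑ a : ZMod d, ∑ b : ZMod d, F l x y a b = 1) ∧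
      (∀ l i, 2 ≤ i → i ≤ m → ∀ a b : ZMod d,
        a - b ≠ qOf d m l (2 * i - 1) → F l i i a b = 0) ∧
      (∀ l i, 2 ≤ i → i ≤ m → ∀ a b : ZMod d,
        b - a ≠ qOf d m l (2 * i - 2) → F l i (i - 1) a b = 0) ∧
      (∀ i, 2 ≤ i → i ≤ m → ∀ a b : ZMod d,
        κ i i a b =
          ∑ l : Fin (2 * m - 2) → ZMod d, (∑ t : ZMod d, FFun d m κ l m t) * F l i i a b ∧
        κ i (i - 1) a b =
          ∑ l : Fin (2 * m - 2) → ZMod d,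
            (∑ t : ZMod d, FFun d m κ l m t) * F l i (i - 1) a b) :=
  ns_behavior_chain_decomposition_general d m hm κ hpos hnorm hnsA hnsB
end

section
/- Fix d ≥ 2, m ≥ 3, x* = 1, and e ∈ ℤ_d. Every no-signaling behavior p ∈ NS(d,d,m,m) whose marginal on input x* is the deterministic point distribution at e admits a decomposition of its chain-relevant probabilities as p = Σ_{q ∈ ℤ_d^{2m-1}} p(q)·P_q on the input pairs of the chain, where p(q) ≥ 0, Σ_q p(q) = 1, and each P_q is a valid behavior satisfying P_q(A_i - B_i = q_{2i-1}) = 1 and P_q(B_i - A_{i+1} = q_{2i}) = 1 for all i, with q_{2m} := -(q_1 + ... + q_{2m-1}) - 1 (mod d). Consequently, p cannot violate any chain inequality: I_{d,m}(p) ≤ I_{d,m}^C. -/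
/-!
Because `A₁` is deterministic, the cyclic chain `A₁ – B₁ – A₂ – ⋯ – Aₘ – Bₘ – A₁` is in effect
the path `A₁ – B₁ – ⋯ – Aₘ – Bₘ`, and no-signalling makes the marginals of consecutive links of
this path agree. Gluing the conditional distributions of the links into a Markov chain started at
`e` produces a joint law of `(A₁, B₁, …, Bₘ)` whose two-point marginals are the links; the closing
pair `(A₁, Bₘ)` is reproduced as well, because `A₁ = e` on both sides. Parametrising the path by
its successive differences `q` writes `p`, on the chain pairs, as a mixture of local deterministic
behaviors. The chain value of a local deterministic behavior is `Σ α(q_c)` over the `2m`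
differences `A₁ - B₁, B₁ - A₂, …, Bₘ - (A₁ + 1)`, which telescope to `-1`, and the chain value is
affine in the behavior.
-/

open scoped BigOperators

/-- The chain Bell value `I_{d,m}` of a behavior `p(a,b|x,y)` (inputs `0,...,m-1`
standing for `1,...,m`), with the convention `A_{m+1} = A_1 + 1`:
`I = Σ_k α_k Σ_i [p(A_i - B_i = k) + p(B_i - A_{i+1} = k)]`, where
`p(A_x - B_y = k) = Σ_j p(j+k, j | x, y)` and the term for `i = m` uses inputs `(1,m)`
with shift `-k-1`. -/
noncomputable def chainValue (d m : ℕ) [NeZero d] [NeZero m] (α : ZMod d → ℝ)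
    (p : Fin m → Fin m → ZMod d → ZMod d → ℝ) : ℝ :=
  ∑ k : ZMod d, α k * ∑ i : Fin m,
    ((∑ j : ZMod d, p i i (j + k) j) +
      (if i.val = m - 1 then ∑ j : ZMod d, p 0 i (j + (-k - 1)) j
       else ∑ j : ZMod d, p (i + 1) i (j + (-k)) j))

/-- The classical (local) bound of the chain inequality:
`max { Σ_{i=1}^{2m} α_{q_i} : q ∈ ℤ_d^{2m}, Σ_i q_i ≡ -1 (mod d) }`. -/
noncomputable def classicalBound (d m : ℕ) [NeZero d] (α : ZMod d → ℝ) : ℝ :=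
  sSup {S : ℝ | ∃ q : Fin (2 * m) → ZMod d, (∑ i, q i) = -1 ∧ S = ∑ i, α (q i)}

open Finset

lemma Fin.sum_pi_snoc_s18 {X M : Type*} [Fintype X] [AddCommMonoid M] {N : ℕ}
    (F : (Fin (N + 1) → X) → M) :
    ∑ q : Fin (N + 1) → X, F q = ∑ q : Fin N → X, ∑ x : X, F (Fin.snoc q x) := by
  rw [← (Fin.snocEquiv fun _ => X).sum_comp, Fintype.sum_prod_type, sum_comm]
  rfl

lemma Fin.sum_univ_two_mul {M : Type*} [AddCommMonoid M] (f : ℕ → M) (n : ℕ) :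
    ∑ c : Fin (2 * n), f c = ∑ i ∈ range n, (f (2 * i) + f (2 * i + 1)) := by
  rw [Fin.sum_univ_eq_sum_range f]
  induction n with
  | zero => simp
  | succ n ih => rw [show 2 * (n + 1) = 2 * n + 1 + 1 by ring, sum_range_succ, sum_range_succ, ih,
      sum_range_succ, add_assoc]

lemma sum_mul_ite_of_iff {G : Type*} [Fintype G] (α : G → ℝ) {P : G → Prop} [DecidablePred P]
    {c : G} (hP : ∀ k, P k ↔ k = c) : ∑ k, α k * (if P k then 1 else 0) = α c := by
  rw [Fintype.sum_eq_single c fun k hk => by simp [(hP k).not.mpr hk]]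
  simp [(hP c).mpr rfl]

lemma eq_zero_of_sum_eq_one {X : Type*} [Fintype X] [DecidableEq X] {f : X → ℝ}
    (hf : ∀ x, 0 ≤ f x) (hsum : ∑ x, f x = 1) {e : X} (he : f e = 1) {a : X} (ha : a ≠ e) :
    f a = 0 := by
  have hrest : ∑ x ∈ univ.erase e, f x = 0 := by
    linarith [add_sum_erase univ f (mem_univ e)]
  exact (sum_eq_zero_iff_of_nonneg fun x _ => hf x).mp hrest a (mem_erase.mpr ⟨ha, mem_univ a⟩)

lemma sum_add_right_eq_sum_mul {κ ι G : Type*} [Fintype ι] [AddCommGroup G] [Fintype G]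
    {p : κ → κ → G → G → ℝ} {w : ι → ℝ} {P : ι → κ → κ → G → G → ℝ} {x y : κ}
    (hxy : ∀ a b, p x y a b = ∑ q, w q * P q x y a b) (s : G) :
    ∑ j, p x y (j + s) j = ∑ q, w q * ∑ j, P q x y (j + s) j := by
  simp only [hxy, mul_sum]
  exact sum_comm

section DiffPath

variable {G : Type*} [AddCommGroup G]

def diffPath (e : G) {N : ℕ} (q : Fin N → G) (c : ℕ) : G :=
  e - ∑ j ∈ range c, if h : j < N then q ⟨j, h⟩ else 0

variable (e : G) {N : ℕ} (q : Fin N → G)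

@[simp]
lemma diffPath_zero : diffPath e q 0 = e := by
  simp [diffPath]

lemma diffPath_succ {c : ℕ} (hc : c < N) :
    diffPath e q (c + 1) = diffPath e q c - q ⟨c, hc⟩ := by
  simp [diffPath, sum_range_succ, hc, sub_sub]

lemma diffPath_self : diffPath e q N = e - ∑ c, q c := by
  rw [diffPath, ← Fin.sum_univ_eq_sum_range (fun j => if h : j < N then q ⟨j, h⟩ else 0)]
  simp

lemma diffPath_snoc {c : ℕ} (x : G) (hc : c ≤ N) :
    diffPath e (Fin.snoc q x : Fin (N + 1) → G) c = diffPath e q c := by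
  unfold diffPath
  congr 1
  refine sum_congr rfl fun j hj => ?_
  have hjN : j < N := (mem_range.mp hj).trans_le hc
  simp [Fin.snoc, hjN, show j < N + 1 by omega]

lemma diffPath_snoc_last (x : G) :
    diffPath e (Fin.snoc q x : Fin (N + 1) → G) (N + 1) = diffPath e q N - x := by
  rw [diffPath_succ e _ N.lt_succ_self, diffPath_snoc e q x le_rfl]
  simp [Fin.snoc]

end DiffPath

section PathWeight

variable {G : Type*} [AddCommGroup G]

noncomputable def pathWeight (K : ℕ → G → G → ℝ) (e : G) {N : ℕ} (q : Fin N → G) : ℝ :=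
  ∏ c ∈ range N, K c (diffPath e q c) (diffPath e q (c + 1))

variable {K : ℕ → G → G → ℝ} {e : G}

lemma pathWeight_nonneg (hK : ∀ c u u', 0 ≤ K c u u') {N : ℕ} (q : Fin N → G) :
    0 ≤ pathWeight K e q :=
  prod_nonneg fun _ _ => hK _ _ _

lemma pathWeight_snoc {N : ℕ} (q : Fin N → G) (x : G) :
    pathWeight K e (Fin.snoc q x : Fin (N + 1) → G) =
      pathWeight K e q * K N (diffPath e q N) (diffPath e q N - x) := by
  rw [pathWeight, prod_range_succ, diffPath_snoc_last, diffPath_snoc e q x le_rfl]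
  congr 1
  refine prod_congr rfl fun c hc => ?_
  have hc : c < N := mem_range.mp hc
  rw [diffPath_snoc e q x hc.le, diffPath_snoc e q x hc]

variable [Fintype G]

lemma sum_pathWeight_snoc_mul {N : ℕ} (q : Fin N → G) (g : G → ℝ) :
    ∑ x, pathWeight K e (Fin.snoc q x : Fin (N + 1) → G) * g (diffPath e q N - x) =
      pathWeight K e q * ∑ u', K N (diffPath e q N) u' * g u' := by
  simp only [pathWeight_snoc, mul_assoc, ← mul_sum]
  exact congrArg _ ((Equiv.subLeft _).sum_comp fun u' => K N (diffPath e q N) u' * g u')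

variable (hK : ∀ c u, ∑ u', K c u u' = 1)
include hK

lemma sum_pathWeight_mul_of_le {M N : ℕ} (hMN : M ≤ N) (F : (ℕ → G) → ℝ)
    (hF : ∀ v v' : ℕ → G, (∀ c ≤ M, v c = v' c) → F v = F v') :
    ∑ q : Fin N → G, pathWeight K e q * F (diffPath e q) =
      ∑ q : Fin M → G, pathWeight K e q * F (diffPath e q) := by
  induction N, hMN using Nat.le_induction with
  | base => rfl
  | succ N hMN ih =>
    rw [Fin.sum_pi_snoc_s18, ← ih]
    refine sum_congr rfl fun q _ => ?_
    have hpath : ∀ x, F (diffPath e (Fin.snoc q x : Fin (N + 1) → G)) = F (diffPath e q) :=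
      fun x => hF _ _ fun c hc => diffPath_snoc e q x (hc.trans hMN)
    have hstep := sum_pathWeight_snoc_mul (K := K) (e := e) q fun _ => 1
    simp only [mul_one, hK] at hstep
    simp only [hpath, ← sum_mul, hstep]

lemma sum_pathWeight {N : ℕ} : ∑ q : Fin N → G, pathWeight K e q = 1 := by
  simpa [pathWeight] using
    sum_pathWeight_mul_of_le hK (Nat.zero_le N) (fun _ => 1) fun _ _ _ => rfl

end PathWeight

section ConditionalKernel

variable {X Y : Type*} [Fintype Y]

/-- On a row of mass zero any distribution would do; the uniform one keeps the kernel
stochastic. -/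
noncomputable def conditionalKernel (π : X → Y → ℝ) (x : X) (y : Y) : ℝ :=
  if ∑ y', π x y' = 0 then (Fintype.card Y : ℝ)⁻¹ else π x y / ∑ y', π x y'

variable {π : X → Y → ℝ}

lemma conditionalKernel_nonneg (hπ : ∀ x y, 0 ≤ π x y) (x : X) (y : Y) :
    0 ≤ conditionalKernel π x y := by
  unfold conditionalKernel
  split_ifs
  · positivity
  · exact div_nonneg (hπ x y) (sum_nonneg fun y' _ => hπ x y')

lemma sum_conditionalKernel [Nonempty Y] (x : X) : ∑ y, conditionalKernel π x y = 1 := by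
  unfold conditionalKernel
  split_ifs with h
  · simp
  · rw [← sum_div, div_self h]

lemma sum_mul_conditionalKernel (hπ : ∀ x y, 0 ≤ π x y) (x : X) (y : Y) :
    (∑ y', π x y') * conditionalKernel π x y = π x y := by
  unfold conditionalKernel
  split_ifs with h
  · rw [h, zero_mul, (sum_eq_zero_iff_of_nonneg fun y' _ => hπ x y').mp h y (mem_univ y)]
  · field_simp

end ConditionalKernel

section MarkovGluing

variable {G : Type*} [AddCommGroup G] [Fintype G] {π : ℕ → G → G → ℝ} {e : G}

noncomputable def markovWeight (π : ℕ → G → G → ℝ) (e : G) {N : ℕ} (q : Fin N → G) : ℝ :=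
  pathWeight (fun c => conditionalKernel (π c)) e q

lemma markovWeight_nonneg (hπ : ∀ c u u', 0 ≤ π c u u') {N : ℕ} (q : Fin N → G) :
    0 ≤ markovWeight π e q :=
  pathWeight_nonneg (fun c => conditionalKernel_nonneg (hπ c)) q

lemma sum_markovWeight {N : ℕ} : ∑ q : Fin N → G, markovWeight π e q = 1 :=
  sum_pathWeight fun _ => sum_conditionalKernel

lemma sum_markovWeight_snoc_mul {N : ℕ} (q : Fin N → G) (g : G → ℝ) :
    ∑ x, markovWeight π e (Fin.snoc q x : Fin (N + 1) → G) * g (diffPath e q N - x) =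
      markovWeight π e q * ∑ u', conditionalKernel (π N) (diffPath e q N) u' * g u' :=
  sum_pathWeight_snoc_mul q g

-- `π c` is the joint law of positions `c` and `c + 1`; `hcons` says that consecutive links
-- agree on their shared position.
variable [DecidableEq G] (hπ : ∀ c u u', 0 ≤ π c u u')
  (hstart : ∀ u, ∑ u', π 0 u u' = if u = e then 1 else 0)
  (hcons : ∀ c u, ∑ u', π (c + 1) u u' = ∑ u'', π c u'' u)
include hπ hstart hcons

lemma sum_markovWeight_mul (n : ℕ) (g : G → ℝ) :
    ∑ q : Fin n → G, markovWeight π e q * g (diffPath e q n) =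
      ∑ u, (∑ u', π n u u') * g u := by
  induction n generalizing g with
  | zero => simp [markovWeight, pathWeight, hstart]
  | succ n ih =>
    simp only [Fin.sum_pi_snoc_s18, diffPath_snoc_last, sum_markovWeight_snoc_mul]
    rw [ih fun u => ∑ u', conditionalKernel (π n) u u' * g u']
    simp only [hcons, mul_sum, ← mul_assoc, sum_mul_conditionalKernel (hπ n), sum_mul]
    exact sum_comm

lemma sum_markovWeight_mul_pair {n N : ℕ} (hn : n + 1 ≤ N) (g : G → G → ℝ) :
    ∑ q : Fin N → G, markovWeight π e q * g (diffPath e q n) (diffPath e q (n + 1)) =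
      ∑ u, ∑ u', π n u u' * g u u' := by
  have hmarg : ∑ q : Fin N → G, markovWeight π e q * g (diffPath e q n) (diffPath e q (n + 1)) =
      ∑ q : Fin (n + 1) → G, markovWeight π e q * g (diffPath e q n) (diffPath e q (n + 1)) :=
    sum_pathWeight_mul_of_le (fun c => sum_conditionalKernel) hn (fun v => g (v n) (v (n + 1)))
      fun v v' h => by rw [h n (by omega), h (n + 1) le_rfl]
  rw [hmarg, Fin.sum_pi_snoc_s18]
  simp only [diffPath_snoc_last, diffPath_snoc _ _ _ le_rfl, sum_markovWeight_snoc_mul]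
  rw [sum_markovWeight_mul hπ hstart hcons n
    fun u => ∑ u', conditionalKernel (π n) u u' * g u u']
  simp only [mul_sum, ← mul_assoc, sum_mul_conditionalKernel (hπ n)]

end MarkovGluing

section DeterministicBehavior

variable {ι G : Type*} [DecidableEq G]

def deterministicBehavior (A B : ι → G) (x y : ι) (a b : G) : ℝ :=
  if A x = a ∧ B y = b then 1 else 0

variable (A B : ι → G)

lemma deterministicBehavior_nonneg (x y : ι) (a b : G) : 0 ≤ deterministicBehavior A B x y a b := by
  unfold deterministicBehavior; positivity

variable [Fintype G]

lemma sum_deterministicBehavior (x y : ι) : ∑ a, ∑ b, deterministicBehavior A B x y a b = 1 := by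
  simp [deterministicBehavior, ite_and]

variable [AddCommGroup G]

lemma sum_deterministicBehavior_add_right (x y : ι) (k : G) :
    ∑ j, deterministicBehavior A B x y (j + k) j = if A x - B y = k then 1 else 0 := by
  simp only [deterministicBehavior]
  rw [sum_eq_single (B y) (fun j _ hj => if_neg fun h => hj h.2.symm) (by simp)]
  simp [sub_eq_iff_eq_add']

end DeterministicBehavior

lemma le_classicalBound {d : ℕ} [NeZero d] (m : ℕ) (α : ZMod d → ℝ) (Q : Fin (2 * m) → ZMod d)
    (hQ : ∑ c, Q c = -1) : ∑ c, α (Q c) ≤ classicalBound d m α := by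
  refine le_csSup ?_ ⟨Q, hQ, rfl⟩
  refine ((Set.finite_range fun Q : Fin (2 * m) → ZMod d => ∑ c, α (Q c)).subset ?_).bddAbove
  rintro _ ⟨Q, -, rfl⟩
  exact ⟨Q, rfl⟩

section ChainValue

variable {d m : ℕ} [NeZero d] [NeZero m]

/-- `A` read on `ℕ`, with the chain's convention `A_{m+1} = A_1 + 1`. -/
def chainExtend (A : Fin m → ZMod d) (n : ℕ) : ZMod d :=
  if h : n < m then A ⟨n, h⟩ else A 0 + 1

lemma chainValue_deterministicBehavior (α : ZMod d → ℝ) (A B : Fin m → ZMod d) :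
    chainValue d m α (deterministicBehavior A B) =
      ∑ i : Fin m, (α (A i - B i) + α (B i - chainExtend A (i.val + 1))) := by
  unfold chainValue
  simp only [sum_deterministicBehavior_add_right, mul_sum]
  rw [sum_comm]
  refine sum_congr rfl fun i _ => ?_
  simp only [mul_add, sum_add_distrib]
  congr 1
  · exact sum_mul_ite_of_iff α fun k => eq_comm
  · split_ifs with hi
    · have hext : chainExtend A (i.val + 1) = A 0 + 1 := dif_neg (by omega)
      exact sum_mul_ite_of_iff α fun k => by
        rw [hext]; constructor <;> intro h <;> linear_combination h
    · have hlt : i.val + 1 < m := by omega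
      have hext : chainExtend A (i.val + 1) = A (i + 1) := by
        rw [chainExtend, dif_pos hlt]; congr; exact (Fin.val_add_one_of_lt' hlt).symm
      exact sum_mul_ite_of_iff α fun k => by
        rw [hext]; constructor <;> intro h <;> linear_combination h

/-- A local deterministic strategy realises the tuple of the `2m` chain differences
`A₁ - B₁, B₁ - A₂, …, Bₘ - Aₘ₊₁`, which telescopes to `A₁ - Aₘ₊₁ = -1`. -/
lemma chainValue_deterministicBehavior_le (α : ZMod d → ℝ) (A B : Fin m → ZMod d) :
    chainValue d m α (deterministicBehavior A B) ≤ classicalBound d m α := by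
  set a := chainExtend A
  set b : ℕ → ZMod d := fun n => if h : n < m then B ⟨n, h⟩ else 0
  set Q : ℕ → ZMod d := fun c =>
    if c % 2 = 0 then a (c / 2) - b (c / 2) else b (c / 2) - a (c / 2 + 1)
  have hQ : ∀ {M : Type} [AddCommMonoid M] (f : ZMod d → M), ∑ c : Fin (2 * m), f (Q c) =
      ∑ i ∈ range m, (f (a i - b i) + f (b i - a (i + 1))) := fun f => by
    rw [Fin.sum_univ_two_mul (fun c => f (Q c))]
    refine sum_congr rfl fun i _ => ?_
    simp only [Q, if_pos (show 2 * i % 2 = 0 by omega), if_neg (show ¬(2 * i + 1) % 2 = 0 by omega),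
      show 2 * i / 2 = i by omega, show (2 * i + 1) / 2 = i by omega]
  have hA : ∀ i : Fin m, A i = a i := fun i => by simp [a, chainExtend]
  have hB : ∀ i : Fin m, B i = b i := fun i => by simp [b]
  rw [chainValue_deterministicBehavior]
  simp only [hA, hB]
  rw [Fin.sum_univ_eq_sum_range (fun i => α (a i - b i) + α (b i - a (i + 1))), ← hQ]
  refine le_classicalBound m α (fun c => Q c) ?_
  refine (hQ (M := ZMod d) id).trans ?_
  simp only [id, sub_add_sub_cancel]
  rw [sum_range_sub']
  simp [a, chainExtend, Nat.pos_of_neZero]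

variable {ι : Type*} [Fintype ι] {p : Fin m → Fin m → ZMod d → ZMod d → ℝ} {w : ι → ℝ}

lemma chainValue_eq_sum_mul (α : ZMod d → ℝ) {P : ι → Fin m → Fin m → ZMod d → ZMod d → ℝ}
    (hdiag : ∀ (i : Fin m) a b, p i i a b = ∑ q, w q * P q i i a b)
    (hnext : ∀ (i : Fin m) (h : i.val + 1 < m) a b,
      p ⟨i.val + 1, h⟩ i a b = ∑ q, w q * P q ⟨i.val + 1, h⟩ i a b)
    (hlast : ∀ a b, p 0 ⟨m - 1, Nat.sub_one_lt (NeZero.ne m)⟩ a b =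
      ∑ q, w q * P q 0 ⟨m - 1, Nat.sub_one_lt (NeZero.ne m)⟩ a b) :
    chainValue d m α p = ∑ q, w q * chainValue d m α (P q) := by
  have hlink : ∀ (k : ZMod d) (i : Fin m),
      (∑ j, p i i (j + k) j) + (if i.val = m - 1 then ∑ j, p 0 i (j + (-k - 1)) j
        else ∑ j, p (i + 1) i (j + (-k)) j) =
      ∑ q, w q * ((∑ j, P q i i (j + k) j) + (if i.val = m - 1 then ∑ j, P q 0 i (j + (-k - 1)) j
        else ∑ j, P q (i + 1) i (j + (-k)) j)) := by
    intro k i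
    simp only [mul_add, sum_add_distrib, sum_add_right_eq_sum_mul (hdiag i)]
    congr 1
    split_ifs with hi
    · obtain rfl : i = ⟨m - 1, Nat.sub_one_lt (NeZero.ne m)⟩ := Fin.ext hi
      exact sum_add_right_eq_sum_mul hlast _
    · have hlt : i.val + 1 < m := by omega
      rw [show i + 1 = ⟨i.val + 1, hlt⟩ from Fin.ext (Fin.val_add_one_of_lt' hlt)]
      exact sum_add_right_eq_sum_mul (hnext i hlt) _
  simp only [chainValue, hlink, mul_sum]
  refine (sum_congr rfl fun k _ => sum_comm).trans (sum_comm.trans ?_)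
  exact sum_congr rfl fun q _ => sum_congr rfl fun k _ => sum_congr rfl fun i _ =>
    mul_left_comm _ _ _


lemma chainValue_le_classicalBound_of_eq_sum (α : ZMod d → ℝ) (hw : ∀ q, 0 ≤ w q)
    (hw1 : ∑ q, w q = 1) (A B : ι → Fin m → ZMod d)
    (hdiag : ∀ (i : Fin m) a b, p i i a b = ∑ q, w q * deterministicBehavior (A q) (B q) i i a b)
    (hnext : ∀ (i : Fin m) (h : i.val + 1 < m) a b,
      p ⟨i.val + 1, h⟩ i a b = ∑ q, w q * deterministicBehavior (A q) (B q) ⟨i.val + 1, h⟩ i a b)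
    (hlast : ∀ a b, p 0 ⟨m - 1, Nat.sub_one_lt (NeZero.ne m)⟩ a b =
      ∑ q, w q * deterministicBehavior (A q) (B q) 0 ⟨m - 1, Nat.sub_one_lt (NeZero.ne m)⟩ a b) :
    chainValue d m α p ≤ classicalBound d m α :=
  calc chainValue d m α p = ∑ q, w q * chainValue d m α (deterministicBehavior (A q) (B q)) :=
        chainValue_eq_sum_mul α hdiag hnext hlast
    _ ≤ ∑ q, w q * classicalBound d m α := sum_le_sum fun q _ =>
        mul_le_mul_of_nonneg_left (chainValue_deterministicBehavior_le α _ _) (hw q)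
    _ = classicalBound d m α := by rw [← sum_mul, hw1, one_mul]

end ChainValue

section PathBehavior

variable {d m : ℕ} [NeZero d]

def pathBehavior (e : ZMod d) {N : ℕ} (q : Fin N → ZMod d) :
    Fin m → Fin m → ZMod d → ZMod d → ℝ :=
  deterministicBehavior (fun i : Fin m => diffPath e q (2 * i)) fun i => diffPath e q (2 * i + 1)

variable {N : ℕ} (e : ZMod d) (q : Fin N → ZMod d)

lemma sum_pathBehavior_self (i : Fin m) (h : 2 * i.val < N) :
    ∑ j, pathBehavior e q i i (j + q ⟨2 * i, h⟩) j = 1 := by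
  rw [pathBehavior, sum_deterministicBehavior_add_right, diffPath_succ e q h, sub_sub_cancel,
    if_pos rfl]

lemma sum_pathBehavior_succ (i : Fin m) (hi : i.val + 1 < m) (h : 2 * i.val + 1 < N) :
    ∑ j, pathBehavior e q ⟨i + 1, hi⟩ i (j - q ⟨2 * i + 1, h⟩) j = 1 := by
  simp only [sub_eq_add_neg]
  rw [pathBehavior, sum_deterministicBehavior_add_right,
    show 2 * (i.val + 1) = 2 * i.val + 1 + 1 by ring, diffPath_succ e q h, sub_sub_cancel_left,
    if_pos rfl]

lemma sum_pathBehavior_last [NeZero m] (hN : 2 * (m - 1) + 1 = N) :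
    ∑ j, pathBehavior e q 0 ⟨m - 1, Nat.sub_one_lt (NeZero.ne m)⟩ (j + ∑ c, q c) j = 1 := by
  rw [pathBehavior, sum_deterministicBehavior_add_right, if_pos]
  simp [hN, diffPath_self]

end PathBehavior

section ChainDecomposition

open Fin.NatCast

variable {d m : ℕ} [NeZero m]

/-- Position `2i` of the chain carries `Aᵢ` and position `2i + 1` carries `Bᵢ`; link `c` is the
joint distribution of the outputs at positions `c` and `c + 1`. -/
def chainLink (p : Fin m → Fin m → ZMod d → ZMod d → ℝ) (c : ℕ) : ZMod d → ZMod d → ℝ :=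
  if c % 2 = 0 then fun a b => p (c / 2 : ℕ) (c / 2 : ℕ) a b
  else fun b a => p ((c + 1) / 2 : ℕ) (c / 2 : ℕ) a b

variable {p : Fin m → Fin m → ZMod d → ZMod d → ℝ}

lemma chainLink_two_mul (i : Fin m) : chainLink p (2 * i) = fun a b => p i i a b := by
  simp [chainLink, Fin.cast_val_eq_self]

lemma chainLink_two_mul_add_one (i : Fin m) (h : i.val + 1 < m) :
    chainLink p (2 * i + 1) = fun b a => p ⟨i + 1, h⟩ i a b := by
  rw [chainLink, if_neg (by omega), show (2 * i.val + 1 + 1) / 2 = i.val + 1 by omega,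
    show (2 * i.val + 1) / 2 = i.val by omega, Fin.cast_val_eq_self,
    show ((i.val + 1 : ℕ) : Fin m) = ⟨i.val + 1, h⟩ from Fin.ext (Fin.val_cast_of_lt h)]

lemma chainLink_nonneg (hpos : ∀ x y a b, 0 ≤ p x y a b) (c : ℕ) (u u' : ZMod d) :
    0 ≤ chainLink p c u u' := by
  unfold chainLink
  split_ifs <;> exact hpos _ _ _ _

variable [NeZero d]

lemma sum_chainLink_succ
    (hnsA : ∀ x y y' a, ∑ b : ZMod d, p x y a b = ∑ b : ZMod d, p x y' a b)
    (hnsB : ∀ x x' y b, ∑ a : ZMod d, p x y a b = ∑ a : ZMod d, p x' y a b) (c : ℕ) (u : ZMod d) :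
    ∑ u', chainLink p (c + 1) u u' = ∑ u', chainLink p c u' u := by
  rcases Nat.even_or_odd' c with ⟨k, rfl | rfl⟩
  · rw [chainLink, chainLink, if_neg (by omega), if_pos (by omega),
      show (2 * k + 1 + 1) / 2 = k + 1 by omega, show (2 * k + 1) / 2 = k by omega,
      show 2 * k / 2 = k by omega]
    exact hnsB _ _ _ u
  · rw [chainLink, chainLink, if_pos (by omega), if_neg (by omega),
      show (2 * k + 1 + 1) / 2 = k + 1 by omega, show (2 * k + 1) / 2 = k by omega]
    exact (hnsA _ _ _ u).symm

lemma sum_chainLink_zero {e : ZMod d} (hpos : ∀ x y a b, 0 ≤ p x y a b)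
    (hnorm : ∀ x y, ∑ a : ZMod d, ∑ b : ZMod d, p x y a b = 1)
    (hdet : ∀ y, ∑ b : ZMod d, p 0 y e b = 1) (u : ZMod d) :
    ∑ u', chainLink p 0 u u' = if u = e then 1 else 0 := by
  simp only [chainLink, Nat.zero_mod, if_true, Nat.zero_div, Nat.cast_zero]
  split_ifs with hu
  · rw [hu, hdet]
  · exact eq_zero_of_sum_eq_one (fun a => sum_nonneg fun b _ => hpos 0 0 a b) (hnorm 0 0)
      (hdet 0) hu

lemma eq_zero_of_ne_of_sum_eq_one {e : ZMod d} (hpos : ∀ x y a b, 0 ≤ p x y a b)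
    (hnorm : ∀ x y, ∑ a : ZMod d, ∑ b : ZMod d, p x y a b = 1)
    (hdet : ∀ y, ∑ b : ZMod d, p 0 y e b = 1) (y : Fin m) {a : ZMod d} (ha : a ≠ e) (b : ZMod d) :
    p 0 y a b = 0 :=
  (sum_eq_zero_iff_of_nonneg fun b _ => hpos 0 y a b).mp
    (eq_zero_of_sum_eq_one (fun a => sum_nonneg fun b _ => hpos 0 y a b) (hnorm 0 y) (hdet y) ha)
    b (mem_univ b)

variable {e : ZMod d} (hpos : ∀ x y a b, 0 ≤ p x y a b)
  (hnorm : ∀ x y, ∑ a : ZMod d, ∑ b : ZMod d, p x y a b = 1)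
  (hnsA : ∀ x y y' a, ∑ b : ZMod d, p x y a b = ∑ b : ZMod d, p x y' a b)
  (hnsB : ∀ x x' y b, ∑ a : ZMod d, p x y a b = ∑ a : ZMod d, p x' y a b)
  (hdet : ∀ y, ∑ b : ZMod d, p 0 y e b = 1)
include hpos hnorm hnsA hnsB hdet

lemma sum_markovWeight_chainLink_mul {n N : ℕ} (hn : n + 1 ≤ N) (g : ZMod d → ZMod d → ℝ) :
    ∑ q : Fin N → ZMod d,
        markovWeight (chainLink p) e q * g (diffPath e q n) (diffPath e q (n + 1)) =
      ∑ u, ∑ u', chainLink p n u u' * g u u' :=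
  sum_markovWeight_mul_pair (chainLink_nonneg hpos)
    (sum_chainLink_zero hpos hnorm hdet) (sum_chainLink_succ hnsA hnsB) hn g

lemma sum_markovWeight_mul_pathBehavior_self (i : Fin m) (a b : ZMod d) :
    ∑ q : Fin (2 * m - 1) → ZMod d, markovWeight (chainLink p) e q * pathBehavior e q i i a b =
      p i i a b := by
  refine (sum_markovWeight_chainLink_mul hpos hnorm hnsA hnsB hdet (n := 2 * i) (N := 2 * m - 1)
    (by omega) fun u u' => if u = a ∧ u' = b then 1 else 0).trans ?_
  simp [chainLink_two_mul, ite_and]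

lemma sum_markovWeight_mul_pathBehavior_succ (i : Fin m) (h : i.val + 1 < m) (a b : ZMod d) :
    ∑ q : Fin (2 * m - 1) → ZMod d,
        markovWeight (chainLink p) e q * pathBehavior e q ⟨i + 1, h⟩ i a b =
      p ⟨i + 1, h⟩ i a b := by
  refine (sum_markovWeight_chainLink_mul hpos hnorm hnsA hnsB hdet (n := 2 * i + 1)
    (N := 2 * m - 1) (by omega) fun u u' => if u' = a ∧ u = b then 1 else 0).trans ?_
  simp [chainLink_two_mul_add_one i h, ite_and]

-- Only the law of `Bₘ` has to match; it is read off the link `(Aₘ, Bₘ)`.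
lemma sum_markovWeight_mul_pathBehavior_last (a b : ZMod d) :
    ∑ q : Fin (2 * m - 1) → ZMod d,
        markovWeight (chainLink p) e q *
          pathBehavior e q 0 ⟨m - 1, Nat.sub_one_lt (NeZero.ne m)⟩ a b =
      p 0 ⟨m - 1, Nat.sub_one_lt (NeZero.ne m)⟩ a b := by
  set y : Fin m := ⟨m - 1, Nat.sub_one_lt (NeZero.ne m)⟩
  have hm : 0 < m := Nat.pos_of_neZero m
  have hpair := sum_markovWeight_chainLink_mul hpos hnorm hnsA hnsB hdet (n := 2 * y)
    (N := 2 * m - 1) (by simp [y]; omega) fun _ u' => if e = a ∧ u' = b then 1 else 0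
  have hpb : ∀ q : Fin (2 * m - 1) → ZMod d, pathBehavior e q 0 y a b =
      if e = a ∧ diffPath e q (2 * y + 1) = b then 1 else 0 := fun q => by
    simp [pathBehavior, deterministicBehavior]
  simp only [hpb]
  refine hpair.trans ?_
  rw [chainLink_two_mul y]
  by_cases ha : e = a
  · subst ha
    simp only [true_and, mul_ite, mul_one, mul_zero, sum_ite_eq', mem_univ, if_true]
    rw [hnsB y 0 y b]
    exact Fintype.sum_eq_single e fun u hu =>
      eq_zero_of_ne_of_sum_eq_one hpos hnorm hdet y hu b
  · simp only [ha, false_and, if_false, mul_zero, sum_const_zero]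
    exact (eq_zero_of_ne_of_sum_eq_one hpos hnorm hdet y (Ne.symm ha) b).symm

end ChainDecomposition

/-- every no-signaling behavior `p ∈ NS(d,d,m,m)` (`m ≥ 3`) whose marginal
on input `x* = 1` (index `0`) is deterministic at `e` admits, on the chain-relevant
input pairs, a convex decomposition `p = Σ_q w(q) P_q` over tuples
`q ∈ ℤ_d^{2m-1}` into valid behaviors satisfying `P_q(A_i - B_i = q_{2i-1}) = 1` and
`P_q(B_i - A_{i+1} = q_{2i}) = 1` with `q_{2m} := -(q_1 + ... + q_{2m-1}) - 1`;
consequently `p` cannot violate any chain inequality. -/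
theorem partially_deterministic_no_chain_violation
    (d m : ℕ) [NeZero d] [NeZero m] (hm : 3 ≤ m) (e : ZMod d)
    (p : Fin m → Fin m → ZMod d → ZMod d → ℝ)
    (hpos : ∀ x y a b, 0 ≤ p x y a b)
    (hnorm : ∀ x y, ∑ a : ZMod d, ∑ b : ZMod d, p x y a b = 1)
    (hnsA : ∀ x y y' a, ∑ b : ZMod d, p x y a b = ∑ b : ZMod d, p x y' a b)
    (hnsB : ∀ x x' y b, ∑ a : ZMod d, p x y a b = ∑ a : ZMod d, p x' y a b)
    (hdet : ∀ y, ∑ b : ZMod d, p 0 y e b = 1) :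
    (∃ (w : (Fin (2 * m - 1) → ZMod d) → ℝ)
        (P : (Fin (2 * m - 1) → ZMod d) → Fin m → Fin m → ZMod d → ZMod d → ℝ),
      (∀ q, 0 ≤ w q) ∧ (∑ q : Fin (2 * m - 1) → ZMod d, w q = 1) ∧
      (∀ q x y a b, 0 ≤ P q x y a b) ∧
      (∀ q x y, ∑ a : ZMod d, ∑ b : ZMod d, P q x y a b = 1) ∧
      (∀ (q : Fin (2 * m - 1) → ZMod d) (i : Fin m),
        ∑ j : ZMod d, P q i i (j + q ⟨2 * i.val, by have := i.isLt; omega⟩) j = 1) ∧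
      (∀ (q : Fin (2 * m - 1) → ZMod d) (i : Fin m) (h : i.val + 1 < m),
        ∑ j : ZMod d,
          P q ⟨i.val + 1, h⟩ i (j - q ⟨2 * i.val + 1, by omega⟩) j = 1) ∧
      (∀ q : Fin (2 * m - 1) → ZMod d,
        ∑ j : ZMod d, P q 0 ⟨m - 1, by omega⟩ (j + ∑ c, q c) j = 1) ∧
      (∀ (i : Fin m) (a b : ZMod d),
        p i i a b = ∑ q : Fin (2 * m - 1) → ZMod d, w q * P q i i a b) ∧
      (∀ (i : Fin m) (h : i.val + 1 < m) (a b : ZMod d),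
        p ⟨i.val + 1, h⟩ i a b =
          ∑ q : Fin (2 * m - 1) → ZMod d, w q * P q ⟨i.val + 1, h⟩ i a b) ∧
      (∀ a b : ZMod d,
        p 0 ⟨m - 1, by omega⟩ a b =
          ∑ q : Fin (2 * m - 1) → ZMod d, w q * P q 0 ⟨m - 1, by omega⟩ a b)) ∧
    (∀ α : ZMod d → ℝ, chainValue d m α p ≤ classicalBound d m α) := by
  have hw : ∀ q : Fin (2 * m - 1) → ZMod d, 0 ≤ markovWeight (chainLink p) e q :=
    markovWeight_nonneg (chainLink_nonneg hpos)
  have hw1 : ∑ q : Fin (2 * m - 1) → ZMod d, markovWeight (chainLink p) e q = 1 :=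
    sum_markovWeight
  have hdiag := fun i a b =>
    (sum_markovWeight_mul_pathBehavior_self hpos hnorm hnsA hnsB hdet i a b).symm
  have hnext := fun i h a b =>
    (sum_markovWeight_mul_pathBehavior_succ hpos hnorm hnsA hnsB hdet i h a b).symm
  have hlast := fun a b =>
    (sum_markovWeight_mul_pathBehavior_last hpos hnorm hnsA hnsB hdet a b).symm
  refine ⟨⟨markovWeight (chainLink p) e, pathBehavior e, hw, hw1,
    fun q => deterministicBehavior_nonneg _ _, fun q => sum_deterministicBehavior _ _,
    fun q i => sum_pathBehavior_self e q i _, fun q i h => sum_pathBehavior_succ e q i h _,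
    fun q => sum_pathBehavior_last e q (by omega), hdiag, hnext, hlast⟩,
    fun α => chainValue_le_classicalBound_of_eq_sum α hw hw1 _ _ hdiag hnext hlast⟩
end
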